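/- Let X be a complex Banach space and T ∈ L(X) a quasi-compact operator with sup_n ‖Tⁿ‖ < ∞. Then the powers Tⁿ converge in operator norm to 0 if and only if T has no eigenvalue of modulus 1. -/

import Mathlib

open Filter Topology

/-- `T` is quasi-compact if some power of `T` is at distance `< 1` from a compact operator. -/
def QuasiCompact {X : Type*} [NormedAddCommGroup X] [NormedSpace ℂ X]
    (T : X →L[ℂ] X) : Prop :=
  ∃ n : ℕ, 1 ≤ n ∧ ∃ K : X →L[ℂ] X, IsCompactOperator K ∧ ‖T ^ n - K‖ < 1

section YKaux

open Metric
open scoped ENNReal NNReal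


variable {X : Type*} [NormedAddCommGroup X] [NormedSpace ℂ X] [CompleteSpace X]

/-- If `C` is compact and `1 - C` is injective, then `1 - C` is bounded below. -/
lemma yk_bdd_below {C : X →L[ℂ] X} (hC : IsCompactOperator ⇑C)
    (hinj : ∀ x : X, (1 - C) x = 0 → x = 0) :
    ∃ c : ℝ, 0 < c ∧ ∀ x : X, c * ‖x‖ ≤ ‖(1 - C) x‖ := by
  by_contra h
  push_neg at h
  have hu : ∀ n : ℕ, ∃ u : X, ‖u‖ = 1 ∧ ‖(1 - C) u‖ < (n + 1 : ℝ)⁻¹ := by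
    intro n
    obtain ⟨x, hx⟩ := h ((n + 1 : ℝ)⁻¹) (by positivity)
    have hx0 : x ≠ 0 := by
      rintro rfl
      simpa using hx
    refine ⟨‖x‖⁻¹ • x, ?_, ?_⟩
    · rw [norm_smul, norm_inv, norm_norm, inv_mul_cancel₀ (norm_ne_zero_iff.2 hx0)]
    · rw [(1 - C).map_smul_of_tower, norm_smul, norm_inv, norm_norm]
      calc ‖x‖⁻¹ * ‖(1 - C) x‖ < ‖x‖⁻¹ * ((n + 1 : ℝ)⁻¹ * ‖x‖) := by
            exact mul_lt_mul_of_pos_left hx (inv_pos.2 (norm_pos_iff.2 hx0))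
        _ = (n + 1 : ℝ)⁻¹ := by
            rw [mul_comm ((n + 1 : ℝ))⁻¹, ← mul_assoc,
              inv_mul_cancel₀ (norm_ne_zero_iff.2 hx0), one_mul]
  choose u hu1 hu2 using hu
  obtain ⟨K, hK, hKsub⟩ := hC.image_closedBall_subset_compact 1
  have hmem : ∀ n, C (u n) ∈ K := fun n =>
    hKsub ⟨u n, by simp [mem_closedBall, dist_zero_right, (hu1 n).le], rfl⟩
  obtain ⟨y, -, φ, hφ, hy⟩ := hK.tendsto_subseq hmem
  have hS0 : Tendsto (fun n => (1 - C) (u n)) atTop (𝓝 0) := by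
    rw [tendsto_zero_iff_norm_tendsto_zero]
    refine squeeze_zero (fun n => norm_nonneg _) (fun n => (hu2 n).le) ?_
    exact tendsto_one_div_add_atTop_nhds_zero_nat.congr (by simp [one_div])
  have hS0' : Tendsto (fun n => (1 - C) (u (φ n))) atTop (𝓝 0) :=
    hS0.comp hφ.tendsto_atTop
  have huy : Tendsto (fun n => u (φ n)) atTop (𝓝 y) := by
    have : ∀ n, u (φ n) = (1 - C) (u (φ n)) + C (u (φ n)) := by
      intro n; simp
    simpa [← this] using hS0'.add hy
  have hy1 : ‖y‖ = 1 := by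
    have hn := (continuous_norm.tendsto y).comp huy
    have hn' : Tendsto (fun _ : ℕ => (1 : ℝ)) atTop (𝓝 ‖y‖) := by
      refine hn.congr fun n => ?_
      simp [Function.comp, hu1]
    exact tendsto_nhds_unique hn' tendsto_const_nhds
  have hSy : (1 - C) y = 0 :=
    tendsto_nhds_unique (((1 - C).continuous.tendsto y).comp huy) hS0'
  have := hinj y hSy
  rw [this, norm_zero] at hy1
  exact zero_ne_one hy1

/-- Riesz lemma within a subspace chain: if `F ≤ G` are submodules, `F` closed, and some
`a ∈ G` is not in `F`, then there is a unit vector in `G` at distance `≥ 1/2` from `F`. -/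
lemma yk_riesz {F G : Submodule ℂ X} (hF : IsClosed (F : Set X)) (hFG : F ≤ G)
    {a : X} (haG : a ∈ G) (haF : a ∉ F) :
    ∃ x : X, x ∈ G ∧ ‖x‖ = 1 ∧ ∀ y ∈ F, (1 : ℝ) / 2 ≤ ‖x - y‖ := by
  set d := Metric.infDist a (F : Set X) with hd
  have hd0 : 0 < d := by
    rw [hd]
    exact (hF.notMem_iff_infDist_pos ⟨0, F.zero_mem⟩).1 haF
  obtain ⟨b, hbF, hb⟩ : ∃ b ∈ (F : Set X), dist a b < 2 * d :=
    (Metric.infDist_lt_iff ⟨0, F.zero_mem⟩).1 (by rw [← hd]; linarith)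
  have hc0 : a - b ≠ 0 := sub_ne_zero.2 fun h => haF (h ▸ hbF)
  have hcn : (0:ℝ) < ‖a - b‖ := norm_pos_iff.2 hc0
  refine ⟨‖a - b‖⁻¹ • (a - b), G.smul_mem _ (G.sub_mem haG (hFG hbF)), ?_, ?_⟩
  · rw [norm_smul, norm_inv, norm_norm, inv_mul_cancel₀ hcn.ne']
  · intro y hyF
    have hkey : ∀ z ∈ (F : Set X), d ≤ ‖a - z‖ := fun z hz => by
      simpa [dist_eq_norm] using Metric.infDist_le_dist_of_mem hz
    have hmem : b + ‖a - b‖ • y ∈ F := F.add_mem hbF (F.smul_mem (‖a - b‖ : ℂ) hyF)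
    have h1 : ‖a - b‖⁻¹ • (a - b) - y = ‖a - b‖⁻¹ • (a - (b + ‖a - b‖ • y)) := by
      rw [smul_sub, smul_sub, smul_add, smul_smul, inv_mul_cancel₀ hcn.ne', one_smul]
      abel
    rw [h1, norm_smul, norm_inv, norm_norm]
    have h2 : d ≤ ‖a - (b + ‖a - b‖ • y)‖ := by
      have : ((‖a - b‖ : ℝ)) • y = ((‖a - b‖ : ℂ)) • y := by
        simp
      exact hkey _ (by rw [this] at hmem ⊢; exact hmem)
    have h3 : ‖a - b‖ ≤ 2 * d := by
      rw [dist_eq_norm] at hb; linarith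
    calc (1:ℝ)/2 = d / (2 * d) := by field_simp
      _ ≤ ‖a - b‖⁻¹ * ‖a - (b + ‖a - b‖ • y)‖ := by
          rw [div_eq_inv_mul]
          exact mul_le_mul (inv_anti₀ hcn h3) h2 hd0.le (inv_nonneg.2 hcn.le)

/-- `1 - (1 - C) ^ n` is a compact operator whenever `C` is. -/
lemma yk_pow_compact {C : X →L[ℂ] X} (hC : IsCompactOperator ⇑C) (n : ℕ) :
    IsCompactOperator ⇑(1 - (1 - C) ^ n) := by
  have hid : 1 - (1 - C) ^ n = (∑ i ∈ Finset.range n, (1 - C) ^ i) * C := by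
    have h := geom_sum_mul (1 - C) n
    have h3 : (1 - C) - 1 = -C := by abel
    rw [h3] at h
    rw [← neg_sub ((1 - C) ^ n) (1 : X →L[ℂ] X), ← h, mul_neg, neg_neg]
  rw [hid, FunLike.coe_mul_eq_comp]
  exact hC.clm_comp (∑ i ∈ Finset.range n, (1 - C) ^ i)

/-- **Fredholm alternative**: if `C` is compact and `1 - C` is not invertible,
then `C` has a fixed point `≠ 0`, i.e. `1` is an eigenvalue of `C`. -/
theorem yk_fredholm {C : X →L[ℂ] X} (hC : IsCompactOperator ⇑C)
    (h : ¬ IsUnit (1 - C)) : ∃ x : X, x ≠ 0 ∧ C x = x := by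
  by_contra hcon
  push_neg at hcon
  set S : X →L[ℂ] X := 1 - C with hS
  have hinj : ∀ x : X, S x = 0 → x = 0 := by
    intro x hx
    by_contra hx0
    refine hcon x hx0 ?_
    have hx' : x - C x = 0 := by
      simpa [hS, ContinuousLinearMap.sub_apply] using hx
    exact (sub_eq_zero.1 hx').symm
  -- injectivity of powers
  have hinjn : ∀ n : ℕ, ∀ x : X, (S ^ n) x = 0 → x = 0 := by
    intro n
    induction n with
    | zero => intro x hx; simpa using hx
    | succ n ih =>
      intro x hx
      rw [pow_succ'] at hx
      exact ih x (hinj _ (by simpa [ContinuousLinearMap.mul_apply] using hx))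
  -- each power is `1 -` compact, hence bounded below with closed range
  have hbb : ∀ n : ℕ, ∃ c : ℝ, 0 < c ∧ ∀ x : X, c * ‖x‖ ≤ ‖(S ^ n) x‖ := by
    intro n
    have hcpt := yk_pow_compact hC n
    have hSn : 1 - (1 - (1 - C) ^ n) = S ^ n := by rw [sub_sub_cancel, hS]
    have := yk_bdd_below (C := 1 - (1 - C) ^ n) hcpt (by rw [hSn]; exact hinjn n)
    rwa [hSn] at this
  have hclosed : ∀ n : ℕ, IsClosed ((LinearMap.range ((S ^ n : X →L[ℂ] X) : X →ₗ[ℂ] X) : Submodule ℂ X) : Set X) := by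
    intro n
    obtain ⟨c, hc0, hc⟩ := hbb n
    have hal : AntilipschitzWith (⟨c, hc0.le⟩ : NNReal)⁻¹ ⇑(S ^ n) := by
      refine (S ^ n).antilipschitz_of_bound fun x => ?_
      have hcx := hc x
      change ‖x‖ ≤ c⁻¹ * ‖(S ^ n) x‖
      rw [← div_eq_inv_mul, le_div_iff₀ hc0]
      linarith
    have := hal.isClosed_range (S ^ n).uniformContinuous
    convert this using 1
    exact LinearMap.coe_range _
  -- surjectivity of S
  have hsurj : LinearMap.range (S : X →ₗ[ℂ] X) = ⊤ := by
    by_contra hne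
    have : ∃ a : X, a ∉ LinearMap.range (S : X →ₗ[ℂ] X) := by
      by_contra hall
      push_neg at hall
      exact hne (Submodule.eq_top_iff'.2 hall)
    obtain ⟨a, ha⟩ := this
    -- the chain of ranges is strictly decreasing
    have hmono : ∀ n m : ℕ, n ≤ m →
        (LinearMap.range ((S ^ m : X →L[ℂ] X) : X →ₗ[ℂ] X) : Submodule ℂ X) ≤ LinearMap.range ((S ^ n : X →L[ℂ] X) : X →ₗ[ℂ] X) := by
      intro n m hnm
      obtain ⟨k, rfl⟩ := Nat.exists_eq_add_of_le hnm
      rintro x ⟨w, rfl⟩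
      exact ⟨(S ^ k) w, by rw [pow_add, ContinuousLinearMap.coe_coe (S ^ n * S ^ k), ContinuousLinearMap.mul_apply,
        ContinuousLinearMap.coe_coe (S ^ n)]⟩
    have hstrict : ∀ n : ℕ, (S ^ n) a ∈ LinearMap.range ((S ^ n : X →L[ℂ] X) : X →ₗ[ℂ] X) ∧
        (S ^ n) a ∉ LinearMap.range ((S ^ (n + 1) : X →L[ℂ] X) : X →ₗ[ℂ] X) := by
      intro n
      refine ⟨⟨a, rfl⟩, ?_⟩
      rintro ⟨w, hw⟩
      rw [pow_succ] at hw
      have hw' : (S ^ n) (S w - a) = 0 := by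
        rw [map_sub, sub_eq_zero, ← ContinuousLinearMap.mul_apply]
        exact hw
      exact ha ⟨w, (sub_eq_zero.1 (hinjn n _ hw')) ▸ rfl⟩
    -- Riesz sequence
    have hx : ∀ n : ℕ, ∃ x : X, x ∈ LinearMap.range ((S ^ n : X →L[ℂ] X) : X →ₗ[ℂ] X) ∧ ‖x‖ = 1 ∧
        ∀ y ∈ LinearMap.range ((S ^ (n + 1) : X →L[ℂ] X) : X →ₗ[ℂ] X), (1 : ℝ) / 2 ≤ ‖x - y‖ := by
      intro n
      exact yk_riesz (hclosed (n + 1)) (hmono n (n + 1) (Nat.le_succ n))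
        (hstrict n).1 (hstrict n).2
    choose x hx1 hx2 hx3 using hx
    -- separation of images under C
    have hsep : ∀ n m : ℕ, n < m → (1 : ℝ) / 2 ≤ ‖C (x n) - C (x m)‖ := by
      intro n m hnm
      have hSxn : S (x n) ∈ LinearMap.range ((S ^ (n + 1) : X →L[ℂ] X) : X →ₗ[ℂ] X) := by
        obtain ⟨w, hw⟩ := hx1 n
        exact ⟨w, by rw [ContinuousLinearMap.coe_coe] at hw; rw [pow_succ', ContinuousLinearMap.coe_coe, ContinuousLinearMap.mul_apply, hw]⟩
      have hxm : x m ∈ LinearMap.range ((S ^ (n + 1) : X →L[ℂ] X) : X →ₗ[ℂ] X) := hmono (n + 1) m hnm (hx1 m)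
      have hSxm : S (x m) ∈ LinearMap.range ((S ^ (n + 1) : X →L[ℂ] X) : X →ₗ[ℂ] X) := by
        obtain ⟨w, hw⟩ := hx1 m
        refine hmono (n + 1) (m + 1) (Nat.succ_le_succ hnm.le)
          ⟨w, by rw [ContinuousLinearMap.coe_coe] at hw; rw [pow_succ', ContinuousLinearMap.coe_coe, ContinuousLinearMap.mul_apply, hw]⟩
      have hy : S (x n) + x m - S (x m) ∈ LinearMap.range ((S ^ (n + 1) : X →L[ℂ] X) : X →ₗ[ℂ] X) :=
        Submodule.sub_mem _ (Submodule.add_mem _ hSxn hxm) hSxm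
      have hkey : C (x n) - C (x m) = x n - (S (x n) + x m - S (x m)) := by
        have h1 : C (x n) = x n - S (x n) := by
          simp [hS, ContinuousLinearMap.sub_apply]
        have h2 : C (x m) = x m - S (x m) := by
          simp [hS, ContinuousLinearMap.sub_apply]
        rw [h1, h2]; abel
      rw [hkey]
      exact hx3 n _ hy
    -- compactness contradiction
    obtain ⟨K, hK, hKsub⟩ := hC.image_closedBall_subset_compact 1
    have hmem : ∀ n, C (x n) ∈ K := fun n =>
      hKsub ⟨x n, by simp [Metric.mem_closedBall, dist_zero_right, (hx2 n).le], rfl⟩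
    obtain ⟨y0, -, φ, hφ, hy0⟩ := hK.tendsto_subseq hmem
    rw [Metric.tendsto_atTop] at hy0
    obtain ⟨N, hN⟩ := hy0 (1 / 4) (by norm_num)
    have h1 := hN N le_rfl
    have h2 := hN (N + 1) (Nat.le_succ N)
    have h3 := hsep (φ N) (φ (N + 1)) (hφ (Nat.lt_succ_self N))
    have h4 : dist (C (x (φ N))) (C (x (φ (N + 1)))) < 1 / 2 := by
      calc dist (C (x (φ N))) (C (x (φ (N + 1))))
          ≤ dist (C (x (φ N))) y0 + dist (C (x (φ (N + 1)))) y0 := dist_triangle_right _ _ _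
        _ < 1 / 4 + 1 / 4 := add_lt_add h1 h2
        _ = 1 / 2 := by norm_num
    rw [dist_eq_norm] at h4
    exact absurd h3 (not_le.2 h4)
  -- S is bijective, hence a unit
  have hker : LinearMap.ker (S : X →ₗ[ℂ] X) = ⊥ := LinearMap.ker_eq_bot'.2 fun x hx => hinj x hx
  let e := ContinuousLinearEquiv.ofBijective S hker hsurj
  refine h ⟨⟨S, (e.symm : X →L[ℂ] X), ?_, ?_⟩, rfl⟩
  · ext x
    exact ContinuousLinearEquiv.ofBijective_apply_symm_apply S hker hsurj x
  · ext x
    exact ContinuousLinearEquiv.ofBijective_symm_apply_apply S hker hsurj x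

open Polynomial in
/-- If a product of operators `T - cᵢ` kills a nonzero vector, one of the `cᵢ` is an
eigenvalue of `T`. -/
lemma yk_list_eigen (T : X →L[ℂ] X) :
    ∀ (l : List ℂ) (x : X),
      ((l.map (fun c : ℂ => T - algebraMap ℂ (X →L[ℂ] X) c)).prod) x = 0 → x ≠ 0 →
      ∃ c ∈ l, ∃ y : X, y ≠ 0 ∧ T y = c • y := by
  intro l
  induction l with
  | nil => intro x hx hx0; simp at hx; exact absurd hx hx0
  | cons c t ih =>
    intro x hx hx0
    rw [List.map_cons, List.prod_cons, ContinuousLinearMap.mul_apply] at hx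
    by_cases hw : ((t.map (fun c : ℂ => T - algebraMap ℂ (X →L[ℂ] X) c)).prod) x = 0
    · obtain ⟨c', hc', y, hy⟩ := ih x hw hx0
      exact ⟨c', List.mem_cons_of_mem _ hc', y, hy⟩
    · refine ⟨c, List.mem_cons_self (a := c) (l := t), _, hw, ?_⟩
      have := hx
      rw [ContinuousLinearMap.sub_apply] at this
      have halg : (algebraMap ℂ (X →L[ℂ] X) c) = c • (1 : X →L[ℂ] X) :=
        Algebra.algebraMap_eq_smul_one c
      rw [halg, ContinuousLinearMap.smul_apply, ContinuousLinearMap.one_apply,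
        sub_eq_zero] at this
      exact this

open Polynomial in
/-- If `Tⁿ` has the eigenvalue `zⁿ` with `|z| = 1`, then `T` has an eigenvalue of
modulus one. -/
lemma yk_pow_eigen (T : X →L[ℂ] X) {n : ℕ} (hn : 1 ≤ n) {z : ℂ} (hz : ‖z‖ = 1)
    {x : X} (hx0 : x ≠ 0) (hTx : (T ^ n) x = z ^ n • x) :
    ∃ c : ℂ, ‖c‖ = 1 ∧ ∃ y : X, y ≠ 0 ∧ T y = c • y := by
  set p : Polynomial ℂ := Polynomial.X ^ n - Polynomial.C (z ^ n) with hp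
  have hmonic : p.Monic := monic_X_pow_sub_C (z ^ n) (by omega)
  have hsplits : Splits p := IsAlgClosed.splits p
  have hfact : p = (p.roots.map fun a => Polynomial.X - Polynomial.C a).prod :=
    hsplits.eq_prod_roots_of_monic hmonic
  set l : List ℂ := p.roots.toList with hl
  have hlfact : p = (l.map fun a => Polynomial.X - Polynomial.C a).prod := by
    rw [hfact]
    conv_lhs => rw [← Multiset.coe_toList p.roots, Multiset.map_coe, Multiset.prod_coe]
  -- apply `aeval T`
  have haeval : aeval T p = T ^ n - algebraMap ℂ (X →L[ℂ] X) (z ^ n) := by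
    rw [hp]; simp [aeval_X_pow]
  have haeval2 : aeval T p =
      ((l.map fun a : ℂ => T - algebraMap ℂ (X →L[ℂ] X) a)).prod := by
    rw [hlfact]
    rw [map_list_prod (aeval T : ℂ[X] →ₐ[ℂ] (X →L[ℂ] X))]
    congr 1
    rw [List.map_map]
    refine List.map_congr_left fun a _ => ?_
    simp [aeval_X]
  have hkill : ((l.map fun a : ℂ => T - algebraMap ℂ (X →L[ℂ] X) a)).prod x = 0 := by
    rw [← haeval2, haeval, ContinuousLinearMap.sub_apply, hTx,
      Algebra.algebraMap_eq_smul_one, ContinuousLinearMap.smul_apply,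
      ContinuousLinearMap.one_apply, sub_self]
  obtain ⟨c, hcl, y, hy0, hTy⟩ := yk_list_eigen T l x hkill hx0
  refine ⟨c, ?_, y, hy0, hTy⟩
  have hroot : c ∈ p.roots := by rwa [hl, Multiset.mem_toList] at hcl
  have hpc : p.eval c = 0 := by
    exact (mem_roots hmonic.ne_zero).1 hroot
  rw [hp] at hpc
  simp only [eval_sub, eval_pow, eval_X, eval_C, sub_eq_zero] at hpc
  have hnorm : ‖c‖ ^ n = 1 := by
    rw [← norm_pow, hpc, norm_pow, hz, one_pow]
  have h01 : (0:ℝ) ≤ ‖c‖ := norm_nonneg _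
  rcases lt_trichotomy (‖c‖) 1 with hlt | heq | hgt
  · have := pow_lt_one₀ h01 hlt (by omega : n ≠ 0)
    linarith
  · exact heq
  · have := one_lt_pow₀ hgt (by omega : n ≠ 0)
    linarith

/-- A spectral value of modulus one of a quasi-compact operator yields an eigenvalue of
modulus one. -/
lemma yk_peripheral (T : X →L[ℂ] X) (hqc : QuasiCompact T) {z : ℂ} (hz : ‖z‖ = 1)
    (hmem : z ∈ spectrum ℂ T) :
    ∃ c : ℂ, ‖c‖ = 1 ∧ ∃ x : X, x ≠ 0 ∧ T x = c • x := by
  obtain ⟨n, hn, K, hK, hlt⟩ := hqc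
  set R : X →L[ℂ] X := T ^ n - K with hR
  set w : ℂ := z ^ n with hwdef
  have hw1 : ‖w‖ = 1 := by rw [hwdef, norm_pow, hz, one_pow]
  have hw0 : w ≠ 0 := by intro h; rw [h, norm_zero] at hw1; exact zero_ne_one hw1
  have hwmem : w ∈ spectrum ℂ (T ^ n) := by
    have hsub := spectrum.subset_polynomial_aeval T (Polynomial.X ^ n : Polynomial ℂ)
    have : w ∈ (fun k => Polynomial.eval k (Polynomial.X ^ n : Polynomial ℂ)) ''
        spectrum ℂ T := ⟨z, hmem, by simp [hwdef]⟩
    have h2 := hsub this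
    rwa [map_pow, Polynomial.aeval_X] at h2
  have hRlt : ‖w⁻¹ • R‖ < 1 := by
    rw [norm_smul w⁻¹ R, norm_inv, hw1, inv_one, one_mul]
    exact hlt
  have hkey : algebraMap ℂ (X →L[ℂ] X) w - R
      = algebraMap ℂ (X →L[ℂ] X) w * (1 - w⁻¹ • R) := by
    rw [mul_sub, mul_one, ← Algebra.smul_def, smul_smul, mul_inv_cancel₀ hw0, one_smul]
  have hA : IsUnit (algebraMap ℂ (X →L[ℂ] X) w - R) := by
    rw [hkey]
    exact ((isUnit_iff_ne_zero.2 hw0).map (algebraMap ℂ (X →L[ℂ] X))).mul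
      (Units.oneSub (w⁻¹ • R) hRlt).isUnit
  obtain ⟨UA, hUA⟩ := hA
  have hdiff : (UA : X →L[ℂ] X) - K = algebraMap ℂ (X →L[ℂ] X) w - T ^ n := by
    rw [hUA, hR]; abel
  have hnotunit : ¬ IsUnit (1 - ((UA⁻¹ : (X →L[ℂ] X)ˣ) : X →L[ℂ] X) * K) := by
    intro hu
    have h1 : IsUnit ((UA : X →L[ℂ] X) *
        (1 - ((UA⁻¹ : (X →L[ℂ] X)ˣ) : X →L[ℂ] X) * K)) := UA.isUnit.mul hu
    rw [mul_sub, mul_one, ← mul_assoc, UA.mul_inv, one_mul, hdiff] at h1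
    exact spectrum.mem_iff.1 hwmem h1
  have hC' : IsCompactOperator ⇑(((UA⁻¹ : (X →L[ℂ] X)ˣ) : X →L[ℂ] X) * K) := by
    rw [FunLike.coe_mul_eq_comp]
    exact hK.clm_comp ((UA⁻¹ : (X →L[ℂ] X)ˣ) : X →L[ℂ] X)
  obtain ⟨x, hx0, hfix⟩ := yk_fredholm hC' hnotunit
  have hKx : K x = (UA : X →L[ℂ] X) x := by
    have := congrArg (fun y => (UA : X →L[ℂ] X) y) hfix
    simp only [ContinuousLinearMap.mul_apply] at this
    rw [← ContinuousLinearMap.mul_apply (UA : X →L[ℂ] X)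
      ((UA⁻¹ : (X →L[ℂ] X)ˣ) : X →L[ℂ] X), UA.mul_inv] at this
    simpa using this
  have hTx : (T ^ n) x = w • x := by
    have h0 : ((UA : X →L[ℂ] X) - K) x = 0 := by
      rw [ContinuousLinearMap.sub_apply, hKx, sub_self]
    rw [hdiff, ContinuousLinearMap.sub_apply, sub_eq_zero] at h0
    rw [← h0, Algebra.algebraMap_eq_smul_one, ContinuousLinearMap.smul_apply,
      ContinuousLinearMap.one_apply]
  exact yk_pow_eigen T hn hz hx0 hTx


end YKaux

open scoped ENNReal NNReal

/-- Yosida–Kakutani: for a power-bounded quasi-compact operator, the powers converge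
to `0` in operator norm iff `T` has no eigenvalue of modulus one. -/
theorem stmt_7 {X : Type*} [NormedAddCommGroup X] [NormedSpace ℂ X] [CompleteSpace X]
    (T : X →L[ℂ] X) (hqc : QuasiCompact T) (C : ℝ) (hbd : ∀ n : ℕ, ‖T ^ n‖ ≤ C) :
    Tendsto (fun n : ℕ => T ^ n) atTop (𝓝 0) ↔
      ∀ z : ℂ, ‖z‖ = 1 → ¬ ∃ x : X, x ≠ 0 ∧ T x = z • x := by
  constructor
  · -- easy direction
    rintro htend z hz ⟨x, hx0, hTx⟩
    have hpow : ∀ n : ℕ, (T ^ n) x = z ^ n • x := by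
      intro n
      induction n with
      | zero => simp
      | succ n ih =>
        rw [pow_succ', ContinuousLinearMap.mul_apply, ih, map_smul, hTx, smul_smul,
          ← pow_succ]
    have hnorm : ∀ n : ℕ, ‖x‖ ≤ ‖T ^ n‖ * ‖x‖ := by
      intro n
      calc ‖x‖ = ‖(T ^ n) x‖ := by rw [hpow n, norm_smul, norm_pow, hz, one_pow, one_mul]
        _ ≤ ‖T ^ n‖ * ‖x‖ := (T ^ n).le_opNorm x
    have htn : Tendsto (fun n : ℕ => ‖T ^ n‖ * ‖x‖) atTop (𝓝 0) := by
      have h1 : Tendsto (fun n : ℕ => ‖T ^ n‖) atTop (𝓝 0) := by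
        simpa using htend.norm
      simpa using h1.mul_const ‖x‖
    have := ge_of_tendsto' htn hnorm
    exact hx0 (norm_le_zero_iff.1 this)
  · intro hno
    rcases subsingleton_or_nontrivial X with hX | hX
    · haveI : Subsingleton (X →L[ℂ] X) :=
        ⟨fun f g => ContinuousLinearMap.ext fun x => Subsingleton.elim _ _⟩
      exact tendsto_const_nhds.congr fun n => Subsingleton.elim 0 (T ^ n)
    · haveI : Nontrivial (X →L[ℂ] X) := by
        obtain ⟨x, hx⟩ := exists_ne (0 : X)
        refine ⟨1, 0, fun h => hx ?_⟩
        have := congrArg (fun f : X →L[ℂ] X => f x) h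
        simpa using this
      -- all spectral values have modulus < 1
      have hspec : ∀ z ∈ spectrum ℂ T, ‖z‖ < 1 := by
        intro z hzmem
        have hle : ‖z‖ ≤ 1 := by
          by_contra hlt
          push_neg at hlt
          have hzn : ∀ n : ℕ, ‖z‖ ^ n ≤ C := by
            intro n
            have hmem : z ^ n ∈ spectrum ℂ (T ^ n) := by
              have hsub := spectrum.subset_polynomial_aeval T (Polynomial.X ^ n : Polynomial ℂ)
              have himg : z ^ n ∈ (fun k => Polynomial.eval k
                  (Polynomial.X ^ n : Polynomial ℂ)) '' spectrum ℂ T :=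
                ⟨z, hzmem, by simp⟩
              have h2 := hsub himg
              rwa [map_pow, Polynomial.aeval_X] at h2
            calc ‖z‖ ^ n = ‖z ^ n‖ := (norm_pow z n).symm
              _ ≤ ‖T ^ n‖ := spectrum.norm_le_norm_of_mem hmem
              _ ≤ C := hbd n
          have := tendsto_pow_atTop_atTop_of_one_lt hlt
          obtain ⟨n, hn⟩ := (this.eventually_gt_atTop C).exists
          exact absurd (hzn n) (not_le.2 hn)
        rcases lt_or_eq_of_le hle with h | h
        · exact h
        · exfalso
          obtain ⟨c, hc1, x, hx0, hTx⟩ := yk_peripheral T hqc h hzmem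
          exact hno c hc1 ⟨x, hx0, hTx⟩
      -- hence the spectral radius is < 1
      have hrad : spectralRadius ℂ T < 1 := by
        obtain ⟨z₀, hz₀mem, hz₀max⟩ := (spectrum.isCompact (𝕜 := ℂ) T).exists_isMaxOn
          (spectrum.nonempty T) continuous_norm.continuousOn
        have hz₀ : ‖z₀‖ < 1 := hspec z₀ hz₀mem
        have hle : spectralRadius ℂ T ≤ ↑‖z₀‖₊ := by
          rw [spectralRadius]
          refine iSup₂_le fun z hz => ?_
          exact_mod_cast hz₀max hz
        refine lt_of_le_of_lt hle ?_
        rw [← ENNReal.coe_one, ENNReal.coe_lt_coe, ← NNReal.coe_lt_coe]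
        simpa using hz₀
      -- Gelfand's formula gives geometric decay
      have hg := spectrum.pow_nnnorm_pow_one_div_tendsto_nhds_spectralRadius T
      obtain ⟨r, hr1, hr2⟩ := ENNReal.lt_iff_exists_nnreal_btwn.1 hrad
      have hr2' : r < 1 := by exact_mod_cast hr2
      have hev : ∀ᶠ (n : ℕ) in atTop, (↑‖T ^ n‖₊ : ℝ≥0∞) ^ (1 / (n : ℝ)) < (r : ℝ≥0∞) :=
        hg.eventually_lt_const hr1
      have hbound : ∀ᶠ (n : ℕ) in atTop, ‖T ^ n‖ ≤ (r : ℝ) ^ n := by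
        filter_upwards [hev, Filter.eventually_ge_atTop 1] with n hlt hn1
        have hn0 : (n : ℝ) ≠ 0 := Nat.cast_ne_zero.2 (by omega)
        have h1 : ((‖T ^ n‖₊ : ℝ≥0∞) ^ (1 / (n : ℝ))) ^ (n : ℝ)
            ≤ (r : ℝ≥0∞) ^ (n : ℝ) :=
          ENNReal.rpow_le_rpow hlt.le (by positivity)
        rw [← ENNReal.rpow_mul, one_div_mul_cancel hn0, ENNReal.rpow_one] at h1
        rw [ENNReal.rpow_natCast, ← ENNReal.coe_pow, ENNReal.coe_le_coe] at h1
        have := NNReal.coe_le_coe.2 h1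
        simpa using this
      refine squeeze_zero_norm' hbound ?_
      exact tendsto_pow_atTop_nhds_zero_of_lt_one r.coe_nonneg hr2'
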